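/- Let q be a real number with 0 < q < 1 and let x, y be complex numbers with |x| < 1/(1−q) and |y| < 1/(1−q). Then the series ∑_{n=0}^{∞} (x ⊕_q y)^n/[n]_q! converges and its sum equals e_q(x)·e_q(y); that is, e_q(x)·e_q(y) = e_q(x ⊕_q y). -/

import Mathlib

open Filter Topology

/-- The `q`-basic number `[n]_q = (1 - q^n)/(1 - q)`. -/
noncomputable def qNum (q : ℝ) (n : ℕ) : ℝ := (1 - q ^ n) / (1 - q)

/-- The `q`-factorial `[n]_q! = [1]_q [2]_q ⋯ [n]_q`, with `[0]_q! = 1`. -/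
noncomputable def qFact (q : ℝ) (n : ℕ) : ℝ := ∏ j ∈ Finset.range n, qNum q (j + 1)

/-- The Gaussian binomial coefficient `[n]_q! / ([k]_q! [n-k]_q!)`. -/
noncomputable def qBinom (q : ℝ) (n k : ℕ) : ℝ := qFact q n / (qFact q k * qFact q (n - k))

/-- The `q`-exponential `e_q(z) = ∑ z^n / [n]_q!`. -/
noncomputable def qExp (q : ℝ) (z : ℂ) : ℂ := ∑' n : ℕ, z ^ n / (qFact q n : ℂ)

/-- The `q`-sine `sin_q(z) = ∑ (-1)^n z^(2n+1) / [2n+1]_q!`. -/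
noncomputable def qSin (q : ℝ) (z : ℂ) : ℂ :=
  ∑' n : ℕ, (-1 : ℂ) ^ n * z ^ (2 * n + 1) / (qFact q (2 * n + 1) : ℂ)

/-- The `q`-cosine `cos_q(z) = ∑ (-1)^n z^(2n) / [2n]_q!`. -/
noncomputable def qCos (q : ℝ) (z : ℂ) : ℂ :=
  ∑' n : ℕ, (-1 : ℂ) ^ n * z ^ (2 * n) / (qFact q (2 * n) : ℂ)

/-- The `q`-addition power `(x ⊕_q y)^n = ∑_{k=0}^n binom_q(n,k) x^k y^(n-k)`. -/
noncomputable def qAddPow (q : ℝ) (x y : ℂ) (n : ℕ) : ℂ :=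
  ∑ k ∈ Finset.range (n + 1), (qBinom q n k : ℂ) * x ^ k * y ^ (n - k)

/-- The `q`-subtraction power `(x ⊖_q y)^n = ∑_{k=0}^n binom_q(n,k) (-1)^(n-k) x^k y^(n-k)`. -/
noncomputable def qSubPow (q : ℝ) (x y : ℂ) (n : ℕ) : ℂ :=
  ∑ k ∈ Finset.range (n + 1), (qBinom q n k : ℂ) * (-1 : ℂ) ^ (n - k) * x ^ k * y ^ (n - k)

/-- The `q`-tangent `tan_q(z) = sin_q(z)/cos_q(z)`. -/
noncomputable def qTan (q : ℝ) (z : ℂ) : ℂ := qSin q z / qCos q z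

/-- The second `q`-exponential `E_q(z) = ∑ q^(n(n-1)/2) z^n / [n]_q!`. -/
noncomputable def qExpE (q : ℝ) (z : ℂ) : ℂ :=
  ∑' n : ℕ, (q : ℂ) ^ (n * (n - 1) / 2) * z ^ n / (qFact q n : ℂ)

/-!
The `q`-binomial coefficient is built so that `(x ⊕_q y)^n / [n]_q!` is exactly the `n`-th
Cauchy-product coefficient of the series of `e_q(x)` and `e_q(y)`. Since `[n]_q → 1/(1-q)`,
the ratio test shows that both series converge absolutely for `‖z‖ < 1/(1-q)`, and Mertens'
theorem on Cauchy products of absolutely convergent series gives the claim.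
-/

section qNum

variable {q : ℝ}

lemma qNum_pos (hq : |q| < 1) {n : ℕ} (hn : n ≠ 0) : 0 < qNum q n := by
  have hqn : q ^ n < 1 := (le_abs_self _).trans_lt <| by
    rw [abs_pow]; exact pow_lt_one₀ (abs_nonneg q) hq hn
  exact div_pos (by linarith) (by linarith [(abs_lt.1 hq).2])

lemma tendsto_qNum_atTop (hq : |q| < 1) : Tendsto (qNum q) atTop (𝓝 (1 / (1 - q))) := by
  have hpow := tendsto_pow_atTop_nhds_zero_of_abs_lt_one hq
  have := (tendsto_const_nhds (x := (1 : ℝ)).sub hpow).div_const (1 - q)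
  rwa [sub_zero] at this

lemma qFact_succ (n : ℕ) : qFact q (n + 1) = qFact q n * qNum q (n + 1) :=
  Finset.prod_range_succ _ _

lemma qFact_pos (hq : |q| < 1) (n : ℕ) : 0 < qFact q n :=
  Finset.prod_pos fun j _ => qNum_pos hq j.succ_ne_zero

lemma qAddPow_div_qFact (x y : ℂ) {n : ℕ} (hn : qFact q n ≠ 0) :
    qAddPow q x y n / qFact q n =
      ∑ k ∈ Finset.range (n + 1), x ^ k / qFact q k * (y ^ (n - k) / qFact q (n - k)) := by
  rw [qAddPow, Finset.sum_div]
  refine Finset.sum_congr rfl fun k _ => ?_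
  have hn' : (qFact q n : ℂ) ≠ 0 := by exact_mod_cast hn
  rw [qBinom, Complex.ofReal_div, Complex.ofReal_mul]
  field_simp

lemma summable_norm_pow_div_qFact (hq : |q| < 1) {z : ℂ} (hz : ‖z‖ < 1 / (1 - q)) :
    Summable fun n : ℕ => ‖z ^ n / (qFact q n : ℂ)‖ := by
  have hnorm (n : ℕ) : ‖z ^ n / (qFact q n : ℂ)‖ = ‖z‖ ^ n / qFact q n := by
    rw [norm_div, norm_pow, Complex.norm_real, Real.norm_of_nonneg (qFact_pos hq n).le]
  simp_rw [hnorm]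
  rcases eq_or_ne z 0 with rfl | hz0
  · exact summable_of_ne_finset_zero (s := {0}) fun n hn => by
      simp [zero_pow (Finset.notMem_singleton.1 hn)]
  have h1q : 0 < 1 - q := by linarith [(abs_lt.1 hq).2]
  have hratio (n : ℕ) : ‖‖z‖ ^ (n + 1) / qFact q (n + 1)‖ / ‖‖z‖ ^ n / qFact q n‖ =
      ‖z‖ / qNum q (n + 1) := by
    have := qFact_pos hq n
    have := qNum_pos hq n.succ_ne_zero
    have := qFact_pos hq (n + 1)
    rw [Real.norm_of_nonneg (by positivity), Real.norm_of_nonneg (by positivity), qFact_succ]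
    field_simp
    ring
  refine summable_of_ratio_test_tendsto_lt_one (l := ‖z‖ / (1 / (1 - q))) ?_
    (Eventually.of_forall fun n => (div_pos (pow_pos (norm_pos_iff.2 hz0) n)
      (qFact_pos hq n)).ne') ?_
  · exact (div_lt_one (by positivity)).2 hz
  · simp_rw [hratio]
    have := (tendsto_qNum_atTop hq).comp (tendsto_add_atTop_nat 1)
    exact tendsto_const_nhds.div this (one_div_pos.2 h1q).ne'

end qNum

/-- `e_q(x) e_q(y) = e_q(x ⊕_q y)`: the series `∑ (x ⊕_q y)^n/[n]_q!` converges
to `e_q(x) e_q(y)`. -/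
theorem qExp_qAdd (q : ℝ) (hq0 : 0 < q) (hq1 : q < 1) (x y : ℂ)
    (hx : ‖x‖ < 1 / (1 - q)) (hy : ‖y‖ < 1 / (1 - q)) :
    HasSum (fun n : ℕ => qAddPow q x y n / (qFact q n : ℂ)) (qExp q x * qExp q y) := by
  have hq : |q| < 1 := abs_lt.2 ⟨by linarith, hq1⟩
  have hcauchy := hasSum_sum_range_mul_of_summable_norm
    (summable_norm_pow_div_qFact hq hx) (summable_norm_pow_div_qFact hq hy)
  simpa only [qExp, ← qAddPow_div_qFact x y (qFact_pos hq _).ne'] using hcauchy
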